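/- arXiv:2406.16393 — 2 statements merged into one kernel-verified Lean document; each statement's English description precedes it below -/
import Mathlib

section
/- For every real number x and natural number n, x^n = Σ_{k=0}^{n} S^B(n,k)·(x)^B_k, where (x)^B_k = (x−1)(x−3)···(x−2k+1) and (x)^B_0 = 1. -/
open Finset in
/-- The set `{±1, …, ±n}` of nonzero integers of absolute value at most `n`. -/
noncomputable def pmN (n : ℕ) : Finset ℤ := (Finset.Icc (-(n : ℤ)) (n : ℤ)).erase 0

/-- Negation of a block. -/
def negBlock (B : Finset ℤ) : Finset ℤ := B.image (fun x => -x)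

/-- `P` is a set partition of `[n]` of type `B`: a partition of `{±1,…,±n}` into nonempty
blocks closed under block negation, with at most one self-negative (zero) block. -/
def IsBPartition (n : ℕ) (P : Finset (Finset ℤ)) : Prop :=
  (∀ B ∈ P, B.Nonempty) ∧
  (∀ B ∈ P, ∀ C ∈ P, B ≠ C → Disjoint B C) ∧
  (∀ i ∈ pmN n, ∃ B ∈ P, i ∈ B) ∧
  (∀ B ∈ P, negBlock B ∈ P) ∧
  (P.filter (fun B => negBlock B = B)).card ≤ 1

noncomputable instance (n : ℕ) : DecidablePred (IsBPartition n) := fun P => by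
  unfold IsBPartition; infer_instance

/-- The finite set of all set partitions of `[n]` of type `B`. -/
noncomputable def BPartitions (n : ℕ) : Finset (Finset (Finset ℤ)) :=
  ((pmN n).powerset.powerset).filter (IsBPartition n)

/-- The type `B` Stirling number of the second kind: the number of type `B` set partitions
of `[n]` with exactly `k` representative non-zero block pairs. -/
noncomputable def SB (n k : ℕ) : ℕ :=
  ((BPartitions n).filter
    (fun P => (P.filter (fun B => negBlock B ≠ B)).card = 2 * k)).card
/-- The type `B` falling factorial `(x)^B_k = (x-1)(x-3)⋯(x-2k+1)`. -/
def fallB (x : ℝ) (k : ℕ) : ℝ := ∏ i ∈ Finset.range k, (x - (2 * (i : ℝ) + 1))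

/-!
Count the maps `g : Fin n → {-m, …, m}`, equivalently the odd maps `{±1, …, ±n} → {-m, …, m}`,
of which there are `(2m+1)^n`, according to the type `B` partition formed by their level sets.
A partition with `k` pairs `±B` of nonzero blocks arises from exactly
`2^k m(m-1)⋯(m-k+1) = (2m+1)^B_k` such maps: the self-negative block must go to `0`, and the `k`
pairs to `k` distinct pairs `±v` with `1 ≤ v ≤ m`. So both sides agree at every `x = 2m+1`, and
two polynomials agreeing at infinitely many points are equal.
-/

open Finset

section SignedInjections

variable (α : Type*) [Fintype α] [DecidableEq α]

noncomputable def signedInjections (m : ℕ) : Finset (α → ℤ) :=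
  (Fintype.piFinset fun _ => (Icc (-(m : ℤ)) m).erase 0).filter
    fun σ => Function.Injective (Int.natAbs ∘ σ)

variable {α}

lemma mem_signedInjections {m : ℕ} {σ : α → ℤ} :
    σ ∈ signedInjections α m ↔
      (∀ a, σ a ≠ 0 ∧ (σ a).natAbs ≤ m) ∧ Function.Injective (Int.natAbs ∘ σ) := by
  simp only [signedInjections, mem_filter, Fintype.mem_piFinset, mem_erase, mem_Icc]
  refine and_congr_left fun _ => forall_congr' fun a => and_congr_right fun _ => ?_
  omega

lemma card_signedInjections (m : ℕ) :
    (signedInjections α m).card = 2 ^ Fintype.card α * m.descFactorial (Fintype.card α) := by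
  have hcard : (univ : Finset ((α → Bool) × (α ↪ Icc 1 m))).card =
      2 ^ Fintype.card α * m.descFactorial (Fintype.card α) := by
    simp [Fintype.card_embedding_eq]
  have hmem {σ : α → ℤ} (hσ : σ ∈ signedInjections α m) (a : α) : (σ a).natAbs ∈ Icc 1 m := by
    have := (mem_signedInjections.mp hσ).1 a
    simp only [mem_Icc]
    omega
  rw [← hcard]
  refine card_bij'
    (fun σ hσ => (fun a => decide (0 < σ a), ⟨fun a => ⟨(σ a).natAbs, hmem hσ a⟩,
      fun a b h => (mem_signedInjections.mp hσ).2 (congrArg Subtype.val h)⟩))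
    (fun p _ a => if p.1 a then ((p.2 a : ℕ) : ℤ) else -((p.2 a : ℕ) : ℤ))
    (fun _ _ => mem_univ _) ?_ ?_ ?_
  · intro p _
    rw [mem_signedInjections]
    refine ⟨fun a => ?_, fun a b h => ?_⟩
    · have := mem_Icc.mp (p.2 a).2
      split_ifs <;> simp <;> omega
    · simp only [Function.comp_apply, apply_ite Int.natAbs, Int.natAbs_neg, Int.natAbs_natCast,
        ite_self] at h
      exact p.2.injective (Subtype.ext h)
  · intro σ hσ
    funext a
    have := (mem_signedInjections.mp hσ).1 a
    show (if decide (0 < σ a) then ((σ a).natAbs : ℤ) else -((σ a).natAbs : ℤ)) = σ a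
    split_ifs with h <;> simp only [decide_eq_true_eq] at h <;> omega
  · intro p _
    have := fun a => mem_Icc.mp (p.2 a).2
    ext a
    · show decide (0 < if p.1 a then ((p.2 a : ℕ) : ℤ) else -((p.2 a : ℕ) : ℤ)) = p.1 a
      specialize this a
      split_ifs with h <;> simp only [h, decide_eq_true_eq, decide_eq_false_iff_not] <;> omega
    · show (if p.1 a then ((p.2 a : ℕ) : ℤ) else -((p.2 a : ℕ) : ℤ)).natAbs = p.2 a
      split_ifs <;> simp

end SignedInjections

@[simp]
lemma mem_negBlock {B : Finset ℤ} {x : ℤ} : x ∈ negBlock B ↔ -x ∈ B := by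
  simp [negBlock, neg_eq_iff_eq_neg]

@[simp]
lemma negBlock_negBlock (B : Finset ℤ) : negBlock (negBlock B) = B := by
  ext; simp

lemma negBlock_injective : Function.Injective negBlock :=
  Function.LeftInverse.injective negBlock_negBlock

lemma mem_pmN {n : ℕ} {i : ℤ} : i ∈ pmN n ↔ i ≠ 0 ∧ -(n : ℤ) ≤ i ∧ i ≤ n := by
  simp [pmN]

lemma neg_mem_pmN {n : ℕ} {i : ℤ} (h : i ∈ pmN n) : -i ∈ pmN n := by
  rw [mem_pmN] at h ⊢; omega

lemma mem_BPartitions {n : ℕ} {P : Finset (Finset ℤ)} :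
    P ∈ BPartitions n ↔ (∀ B ∈ P, B ⊆ pmN n) ∧ IsBPartition n P := by
  simp [BPartitions, subset_iff]

namespace IsBPartition

variable {n : ℕ} {P : Finset (Finset ℤ)} {B C : Finset ℤ} {i : ℤ}

lemma nonempty (hP : IsBPartition n P) (hB : B ∈ P) : B.Nonempty := hP.1 B hB

lemma eq_of_mem_of_mem (hP : IsBPartition n P) (hB : B ∈ P) (hC : C ∈ P) (hiB : i ∈ B)
    (hiC : i ∈ C) : B = C :=
  by_contra fun h => disjoint_left.mp (hP.2.1 B hB C hC h) hiB hiC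

lemma exists_mem (hP : IsBPartition n P) (hi : i ∈ pmN n) : ∃ B ∈ P, i ∈ B := hP.2.2.1 i hi

lemma negBlock_mem (hP : IsBPartition n P) (hB : B ∈ P) : negBlock B ∈ P := hP.2.2.2.1 B hB

lemma eq_of_negBlock_eq_self (hP : IsBPartition n P) (hB : B ∈ P) (hC : C ∈ P)
    (hBB : negBlock B = B) (hCC : negBlock C = C) : B = C :=
  card_le_one.mp hP.2.2.2.2 B (mem_filter.mpr ⟨hB, hBB⟩) C (mem_filter.mpr ⟨hC, hCC⟩)

lemma negBlock_eq_self_of_neg_mem (hP : IsBPartition n P) (hB : B ∈ P) (hi : i ∈ B)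
    (hi' : -i ∈ B) : negBlock B = B :=
  hP.eq_of_mem_of_mem (hP.negBlock_mem hB) hB (mem_negBlock.mpr hi') hi

end IsBPartition

section Kernel

variable {n : ℕ}

/-- `g` encodes the odd map on `{±1, …, ±n}` sending `t + 1` to `g t`. -/
def oddExt (g : Fin n → ℤ) (i : ℤ) : ℤ :=
  if h : i.natAbs - 1 < n then i.sign * g ⟨i.natAbs - 1, h⟩ else 0

lemma oddExt_neg (g : Fin n → ℤ) (i : ℤ) : oddExt g (-i) = -oddExt g i := by
  simp only [oddExt, Int.natAbs_neg, Int.sign_neg]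
  split_ifs <;> simp

lemma oddExt_natCast_add_one (g : Fin n → ℤ) (t : Fin n) : oddExt g (t + 1) = g t := by
  have h : ((t : ℤ) + 1).natAbs - 1 = t := by omega
  simp [oddExt, h]

lemma oddExt_eq_of_odd {f : ℤ → ℤ} (hf : ∀ i ∈ pmN n, f (-i) = -f i) {i : ℤ} (hi : i ∈ pmN n) :
    oddExt (fun t : Fin n => f (t + 1)) i = f i := by
  obtain ⟨hi0, hlo, hhi⟩ := mem_pmN.mp hi
  have hlt : i.natAbs - 1 < n := by omega
  rw [oddExt, dif_pos hlt]
  rcases hi0.lt_or_gt with hneg | hpos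
  · have h : ((i.natAbs - 1 : ℕ) : ℤ) + 1 = -i := by omega
    simp [h, hf i hi, Int.sign_eq_neg_one_of_neg hneg]
  · have h : ((i.natAbs - 1 : ℕ) : ℤ) + 1 = i := by omega
    simp [h, Int.sign_eq_one_of_pos hpos]

noncomputable def kerBlock (g : Fin n → ℤ) (i : ℤ) : Finset ℤ :=
  (pmN n).filter fun j => oddExt g j = oddExt g i

noncomputable def kerPartition (g : Fin n → ℤ) : Finset (Finset ℤ) := (pmN n).image (kerBlock g)

lemma mem_kerBlock {g : Fin n → ℤ} {i j : ℤ} :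
    j ∈ kerBlock g i ↔ j ∈ pmN n ∧ oddExt g j = oddExt g i := mem_filter

lemma negBlock_kerBlock (g : Fin n → ℤ) (i : ℤ) : negBlock (kerBlock g i) = kerBlock g (-i) := by
  ext j
  simp only [mem_negBlock, mem_kerBlock, oddExt_neg, neg_eq_iff_eq_neg]
  exact and_congr_left fun _ => ⟨fun h => by simpa using neg_mem_pmN h, neg_mem_pmN⟩

lemma kerBlock_eq_of_mem {g : Fin n → ℤ} {i j : ℤ} (h : j ∈ kerBlock g i) :
    kerBlock g j = kerBlock g i := by
  unfold kerBlock; rw [(mem_kerBlock.mp h).2]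

lemma oddExt_eq_zero_of_negBlock_kerBlock {g : Fin n → ℤ} {i : ℤ}
    (h : negBlock (kerBlock g i) = kerBlock g i) (hi : i ∈ pmN n) : oddExt g i = 0 := by
  have hneg : -i ∈ kerBlock g i := by
    rw [← h, mem_negBlock, neg_neg]
    exact mem_kerBlock.mpr ⟨hi, rfl⟩
  have := (mem_kerBlock.mp hneg).2
  rw [oddExt_neg] at this
  omega

lemma kerPartition_mem_BPartitions (g : Fin n → ℤ) : kerPartition g ∈ BPartitions n := by
  simp only [mem_BPartitions, kerPartition, forall_mem_image]
  refine ⟨fun i _ => filter_subset _ _, ?_, ?_, ?_, ?_, ?_⟩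
  · simp only [forall_mem_image]
    exact fun i hi => ⟨i, mem_kerBlock.mpr ⟨hi, rfl⟩⟩
  · simp only [forall_mem_image]
    intro i _ j _ hne
    refine disjoint_left.mpr fun k hki hkj => hne ?_
    rw [← kerBlock_eq_of_mem hki, kerBlock_eq_of_mem hkj]
  · exact fun i hi => ⟨kerBlock g i, mem_image_of_mem _ hi, mem_kerBlock.mpr ⟨hi, rfl⟩⟩
  · simp only [forall_mem_image, negBlock_kerBlock]
    exact fun i hi => mem_image_of_mem _ (neg_mem_pmN hi)
  · refine card_le_one.mpr fun B hB C hC => ?_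
    simp only [mem_filter, mem_image] at hB hC
    obtain ⟨⟨i, hi, rfl⟩, hii⟩ := hB
    obtain ⟨⟨j, hj, rfl⟩, hjj⟩ := hC
    unfold kerBlock
    rw [oddExt_eq_zero_of_negBlock_kerBlock hii hi, oddExt_eq_zero_of_negBlock_kerBlock hjj hj]

end Kernel

section Representatives

variable {n : ℕ} {P : Finset (Finset ℤ)} {B : Finset ℤ}

noncomputable def minAbs (B : Finset ℤ) : ℕ := sInf (Int.natAbs '' B)

lemma exists_natAbs_eq_minAbs (h : B.Nonempty) : ∃ b ∈ B, b.natAbs = minAbs B := by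
  simpa [minAbs] using Nat.sInf_mem ((coe_nonempty.mpr h).image Int.natAbs)

lemma minAbs_negBlock (B : Finset ℤ) : minAbs (negBlock B) = minAbs B := by
  simp only [minAbs, negBlock, coe_image, Set.image_image, Int.natAbs_neg]

/-- Of each pair `B ≠ -B` of blocks, exactly one contains the positive element of least absolute
value of `B ∪ -B`: that one is the representative. -/
noncomputable def reps (P : Finset (Finset ℤ)) : Finset (Finset ℤ) :=
  P.filter fun B => negBlock B ≠ B ∧ (minAbs B : ℤ) ∈ B

lemma mem_reps : B ∈ reps P ↔ B ∈ P ∧ negBlock B ≠ B ∧ (minAbs B : ℤ) ∈ B := mem_filter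

lemma negBlock_notMem_reps (hP : IsBPartition n P) (hB : B ∈ reps P) : negBlock B ∉ reps P := by
  obtain ⟨hBP, hne, hmin⟩ := mem_reps.mp hB
  intro h
  rw [mem_reps, minAbs_negBlock, mem_negBlock] at h
  exact hne (hP.negBlock_eq_self_of_neg_mem hBP hmin h.2.2)

lemma mem_reps_or_negBlock_mem_reps (hP : IsBPartition n P) (hB : B ∈ P) (hne : negBlock B ≠ B) :
    B ∈ reps P ∨ negBlock B ∈ reps P := by
  obtain ⟨b, hb, hbmin⟩ := exists_natAbs_eq_minAbs (hP.nonempty hB)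
  rcases Int.natAbs_eq b with h | h
  · exact Or.inl (mem_reps.mpr ⟨hB, hne, by rwa [← hbmin, ← h]⟩)
  · refine Or.inr (mem_reps.mpr ⟨hP.negBlock_mem hB, by simpa [eq_comm] using hne, ?_⟩)
    rwa [minAbs_negBlock, mem_negBlock, ← hbmin, ← h]

lemma card_filter_negBlock_ne (hP : IsBPartition n P) :
    (P.filter fun B => negBlock B ≠ B).card = 2 * (reps P).card := by
  have hsplit : P.filter (fun B => negBlock B ≠ B) = reps P ∪ (reps P).image negBlock := by
    ext B
    simp only [mem_filter, mem_union, mem_image]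
    constructor
    · rintro ⟨hB, hne⟩
      exact (mem_reps_or_negBlock_mem_reps hP hB hne).imp id
        fun h => ⟨negBlock B, h, negBlock_negBlock B⟩
    · rintro (h | ⟨C, hC, rfl⟩)
      · exact ⟨(mem_reps.mp h).1, (mem_reps.mp h).2.1⟩
      · obtain ⟨hCP, hne, -⟩ := mem_reps.mp hC
        exact ⟨hP.negBlock_mem hCP, by simpa [eq_comm] using hne⟩
  have hdisj : Disjoint (reps P) ((reps P).image negBlock) := by
    simp only [disjoint_right, mem_image]
    rintro _ ⟨C, hC, rfl⟩
    exact negBlock_notMem_reps hP hC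
  rw [hsplit, card_union_of_disjoint hdisj, card_image_of_injective _ negBlock_injective]
  ring

lemma card_reps_le (hP : P ∈ BPartitions n) : (reps P).card ≤ n := by
  obtain ⟨hsub, hP⟩ := mem_BPartitions.mp hP
  have hmaps : ∀ B ∈ reps P, minAbs B ∈ Icc 1 n := by
    intro B hB
    have := mem_pmN.mp (hsub B (mem_reps.mp hB).1 (mem_reps.mp hB).2.2)
    simp only [mem_Icc]
    omega
  have hinj : Set.InjOn minAbs (reps P) := by
    intro B hB C hC h
    exact hP.eq_of_mem_of_mem (mem_reps.mp hB).1 (mem_reps.mp hC).1 (mem_reps.mp hB).2.2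
      (h ▸ (mem_reps.mp hC).2.2)
  simpa using card_le_card_of_injOn minAbs hmaps hinj

lemma SB_eq_card_filter_card_reps (n k : ℕ) :
    SB n k = ((BPartitions n).filter fun P => (reps P).card = k).card := by
  unfold SB
  congr 1
  refine filter_congr fun P hP => ?_
  rw [card_filter_negBlock_ne (mem_BPartitions.mp hP).2]
  omega

end Representatives

section BlockValues

variable {n : ℕ} {P : Finset (Finset ℤ)} {B C : Finset ℤ} {i : ℤ}

noncomputable def blockOf (P : Finset (Finset ℤ)) (i : ℤ) : Finset ℤ :=
  if h : ∃ B ∈ P, i ∈ B then h.choose else ∅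

lemma blockOf_eq (hP : IsBPartition n P) (hB : B ∈ P) (hi : i ∈ B) : blockOf P i = B := by
  have h : ∃ B ∈ P, i ∈ B := ⟨B, hB, hi⟩
  rw [blockOf, dif_pos h]
  exact hP.eq_of_mem_of_mem h.choose_spec.1 hB h.choose_spec.2 hi

lemma blockOf_mem (hP : IsBPartition n P) (hi : i ∈ pmN n) :
    blockOf P i ∈ P ∧ i ∈ blockOf P i := by
  obtain ⟨B, hB, hiB⟩ := hP.exists_mem hi
  rw [blockOf_eq hP hB hiB]
  exact ⟨hB, hiB⟩

lemma blockOf_neg (hP : IsBPartition n P) (hi : i ∈ pmN n) :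
    blockOf P (-i) = negBlock (blockOf P i) :=
  blockOf_eq hP (hP.negBlock_mem (blockOf_mem hP hi).1) (by simpa using (blockOf_mem hP hi).2)

noncomputable def blockVal (σ : reps P → ℤ) (B : Finset ℤ) : ℤ :=
  if h : B ∈ reps P then σ ⟨B, h⟩ else if h : negBlock B ∈ reps P then -σ ⟨negBlock B, h⟩ else 0

lemma blockVal_of_mem_reps (σ : reps P → ℤ) (h : B ∈ reps P) : blockVal σ B = σ ⟨B, h⟩ :=
  dif_pos h

lemma blockVal_of_negBlock_eq_self (σ : reps P → ℤ) (h : negBlock B = B) : blockVal σ B = 0 := by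
  have hB : B ∉ reps P := fun hB => (mem_reps.mp hB).2.1 h
  rw [blockVal, dif_neg hB, dif_neg (by rwa [h])]

lemma blockVal_negBlock (hP : IsBPartition n P) (σ : reps P → ℤ) (B : Finset ℤ) :
    blockVal σ (negBlock B) = -blockVal σ B := by
  by_cases h : B ∈ reps P
  · simp [blockVal, h, negBlock_notMem_reps hP h]
  · by_cases h' : negBlock B ∈ reps P <;> simp [blockVal, h, h']

lemma exists_rep_natAbs_blockVal (hP : IsBPartition n P) (σ : reps P → ℤ) (hB : B ∈ P)
    (hne : negBlock B ≠ B) :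
    ∃ r : reps P, (B = r ∨ B = negBlock r) ∧ (blockVal σ B).natAbs = (σ r).natAbs := by
  rcases mem_reps_or_negBlock_mem_reps hP hB hne with h | h
  · exact ⟨⟨B, h⟩, Or.inl rfl, by rw [blockVal_of_mem_reps σ h]⟩
  · refine ⟨⟨negBlock B, h⟩, Or.inr (negBlock_negBlock B).symm, ?_⟩
    have hneg := blockVal_negBlock hP σ (negBlock B)
    rw [negBlock_negBlock] at hneg
    rw [hneg, Int.natAbs_neg, blockVal_of_mem_reps σ h]

lemma blockVal_injOn (hP : IsBPartition n P) {σ : reps P → ℤ} (hσ0 : ∀ r, σ r ≠ 0)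
    (hσ : Function.Injective (Int.natAbs ∘ σ)) : Set.InjOn (blockVal σ) P := by
  have hzero : ∀ B ∈ P, blockVal σ B = 0 → negBlock B = B := by
    intro B hB h0
    by_contra hne
    obtain ⟨r, -, hr⟩ := exists_rep_natAbs_blockVal hP σ hB hne
    exact hσ0 r (by simpa [h0] using hr.symm)
  intro B hB C hC h
  by_cases hB0 : blockVal σ B = 0
  · exact hP.eq_of_negBlock_eq_self hB hC (hzero B hB hB0) (hzero C hC (h ▸ hB0))
  have hC0 : blockVal σ C ≠ 0 := h ▸ hB0
  obtain ⟨r, hrB, hr⟩ :=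
    exists_rep_natAbs_blockVal hP σ hB (mt (blockVal_of_negBlock_eq_self σ) hB0)
  obtain ⟨s, hsC, hs⟩ :=
    exists_rep_natAbs_blockVal hP σ hC (mt (blockVal_of_negBlock_eq_self σ) hC0)
  obtain rfl : r = s := hσ (by simp only [Function.comp_apply, ← hr, ← hs, h])
  by_contra hBC
  have hCB : C = negBlock B := by
    rcases hrB with rfl | rfl <;> rcases hsC with rfl | rfl <;> simp_all
  rw [hCB, blockVal_negBlock hP] at h
  omega

end BlockValues

section Fibers

variable {n m : ℕ} {P : Finset (Finset ℤ)} {B : Finset ℤ} {g : Fin n → ℤ} {i j : ℤ}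

noncomputable def funsIcc (n m : ℕ) : Finset (Fin n → ℤ) :=
  Fintype.piFinset fun _ => Icc (-(m : ℤ)) m

lemma card_funsIcc (n m : ℕ) : (funsIcc n m).card = (2 * m + 1) ^ n := by
  simp only [funsIcc, Fintype.card_piFinset, Int.card_Icc, prod_const, card_univ,
    Fintype.card_fin]
  congr 1
  omega

lemma natAbs_oddExt_le (hg : g ∈ funsIcc n m) (i : ℤ) : (oddExt g i).natAbs ≤ m := by
  rw [funsIcc, Fintype.mem_piFinset] at hg
  unfold oddExt
  split_ifs with h
  · have := mem_Icc.mp (hg ⟨_, h⟩)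
    rcases Int.sign_trichotomy i with hs | hs | hs <;> simp only [hs] <;> omega
  · simp

lemma mem_iff_of_kerPartition_eq (hg : kerPartition g = P) (hB : B ∈ P) (hi : i ∈ B) :
    j ∈ B ↔ j ∈ pmN n ∧ oddExt g j = oddExt g i := by
  rw [← hg, kerPartition, mem_image] at hB
  obtain ⟨i₀, -, rfl⟩ := hB
  rw [← kerBlock_eq_of_mem hi, mem_kerBlock]

lemma oddExt_eq_zero_iff_of_kerPartition_eq (hg : kerPartition g = P) (hB : B ∈ P) (hi : i ∈ B) :
    oddExt g i = 0 ↔ negBlock B = B := by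
  have hP := (mem_BPartitions.mp (hg ▸ kerPartition_mem_BPartitions g)).2
  have hipm := ((mem_iff_of_kerPartition_eq hg hB hi).mp hi).1
  have hneg : -i ∈ B ↔ oddExt g i = 0 := by
    rw [mem_iff_of_kerPartition_eq hg hB hi, oddExt_neg]
    simp only [neg_mem_pmN hipm, true_and]
    omega
  rw [← hneg]
  exact ⟨hP.negBlock_eq_self_of_neg_mem hB hi, fun h => by rwa [← h, mem_negBlock, neg_neg]⟩

noncomputable def repVals (P : Finset (Finset ℤ)) (g : Fin n → ℤ) : reps P → ℤ :=
  fun r => oddExt g (minAbs r.1)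

noncomputable def funOfRepVals (n : ℕ) (P : Finset (Finset ℤ)) (σ : reps P → ℤ) : Fin n → ℤ :=
  fun t => blockVal σ (blockOf P (t + 1))

lemma blockVal_repVals (hg : kerPartition g = P) (hB : B ∈ P) (hi : i ∈ B) :
    blockVal (repVals P g) B = oddExt g i := by
  have hP := (mem_BPartitions.mp (hg ▸ kerPartition_mem_BPartitions g)).2
  have hrep {C : Finset ℤ} (hC : C ∈ reps P) {j : ℤ} (hj : j ∈ C) :
      blockVal (repVals P g) C = oddExt g j := by
    obtain ⟨hCP, -, hmin⟩ := mem_reps.mp hC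
    rw [blockVal_of_mem_reps _ hC, repVals]
    exact ((mem_iff_of_kerPartition_eq hg hCP hj).mp hmin).2
  by_cases hself : negBlock B = B
  · rw [blockVal_of_negBlock_eq_self _ hself,
      (oddExt_eq_zero_iff_of_kerPartition_eq hg hB hi).mpr hself]
  rcases mem_reps_or_negBlock_mem_reps hP hB hself with h | h
  · exact hrep h hi
  · have := hrep h (show -i ∈ negBlock B by simpa)
    rw [blockVal_negBlock hP, oddExt_neg] at this
    omega

lemma repVals_mem_signedInjections (hg : g ∈ funsIcc n m) (hgP : kerPartition g = P) :
    repVals P g ∈ signedInjections (reps P) m := by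
  have hP := mem_BPartitions.mp (hgP ▸ kerPartition_mem_BPartitions g)
  refine mem_signedInjections.mpr ⟨fun r => ⟨?_, natAbs_oddExt_le hg _⟩, fun r s h => ?_⟩
  · obtain ⟨hrP, hne, hmin⟩ := mem_reps.mp r.2
    exact mt (oddExt_eq_zero_iff_of_kerPartition_eq hgP hrP hmin).mp hne
  obtain ⟨hrP, -, hr⟩ := mem_reps.mp r.2
  obtain ⟨hsP, -, hs⟩ := mem_reps.mp s.2
  have hrpm := hP.1 _ hrP hr
  rcases Int.natAbs_eq_natAbs_iff.mp h with h | h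
  · have hrs : (minAbs r.1 : ℤ) ∈ s.1 := (mem_iff_of_kerPartition_eq hgP hsP hs).mpr ⟨hrpm, h⟩
    exact Subtype.ext (hP.2.eq_of_mem_of_mem hrP hsP hr hrs)
  · have hrs : (minAbs r.1 : ℤ) ∈ negBlock s.1 := by
      rw [mem_negBlock, mem_iff_of_kerPartition_eq hgP hsP hs, oddExt_neg]
      exact ⟨neg_mem_pmN hrpm, by simp [repVals] at h; omega⟩
    have hr_eq := hP.2.eq_of_mem_of_mem hrP (hP.2.negBlock_mem hsP) hr hrs
    exact absurd (hr_eq ▸ r.2) (negBlock_notMem_reps hP.2 s.2)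

lemma oddExt_funOfRepVals (hP : IsBPartition n P) (σ : reps P → ℤ) (hi : i ∈ pmN n) :
    oddExt (funOfRepVals n P σ) i = blockVal σ (blockOf P i) :=
  oddExt_eq_of_odd (f := fun i => blockVal σ (blockOf P i))
    (fun _ hj => by rw [blockOf_neg hP hj, blockVal_negBlock hP]) hi

lemma funOfRepVals_mem_funsIcc {σ : reps P → ℤ} (hσ : σ ∈ signedInjections (reps P) m) :
    funOfRepVals n P σ ∈ funsIcc n m := by
  have hσm := fun r => ((mem_signedInjections.mp hσ).1 r).2
  have hB (B : Finset ℤ) : (blockVal σ B).natAbs ≤ m := by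
    unfold blockVal
    split_ifs <;> simp [hσm]
  simp only [funsIcc, Fintype.mem_piFinset, mem_Icc]
  exact fun t => by have := hB (blockOf P (t + 1)); unfold funOfRepVals; omega

lemma kerPartition_funOfRepVals (hP : P ∈ BPartitions n) {σ : reps P → ℤ}
    (hσ : σ ∈ signedInjections (reps P) m) : kerPartition (funOfRepVals n P σ) = P := by
  obtain ⟨hsub, hP⟩ := mem_BPartitions.mp hP
  have hinj := blockVal_injOn hP (fun r => ((mem_signedInjections.mp hσ).1 r).1)
    (mem_signedInjections.mp hσ).2
  have hblock : ∀ i ∈ pmN n, kerBlock (funOfRepVals n P σ) i = blockOf P i := by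
    intro i hi
    ext j
    rw [mem_kerBlock]
    constructor
    · rintro ⟨hj, hval⟩
      rw [oddExt_funOfRepVals hP σ hj, oddExt_funOfRepVals hP σ hi] at hval
      rw [← hinj (blockOf_mem hP hj).1 (blockOf_mem hP hi).1 hval]
      exact (blockOf_mem hP hj).2
    · intro hj
      have hjpm := hsub _ (blockOf_mem hP hi).1 hj
      refine ⟨hjpm, ?_⟩
      rw [oddExt_funOfRepVals hP σ hjpm, oddExt_funOfRepVals hP σ hi,
        blockOf_eq hP (blockOf_mem hP hi).1 hj]
  ext B
  rw [kerPartition, mem_image]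
  constructor
  · rintro ⟨i, hi, rfl⟩
    rw [hblock i hi]
    exact (blockOf_mem hP hi).1
  · intro hB
    obtain ⟨i, hi⟩ := hP.nonempty hB
    have hipm := hsub B hB hi
    exact ⟨i, hipm, by rw [hblock i hipm, blockOf_eq hP hB hi]⟩

lemma card_filter_kerPartition_eq (hP : P ∈ BPartitions n) (m : ℕ) :
    ((funsIcc n m).filter fun g => kerPartition g = P).card =
      2 ^ (reps P).card * m.descFactorial (reps P).card := by
  rw [← Fintype.card_coe (reps P), ← card_signedInjections]
  refine card_bij' (fun g _ => repVals P g) (fun σ _ => funOfRepVals n P σ)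
    (fun g hg => repVals_mem_signedInjections (mem_filter.mp hg).1 (mem_filter.mp hg).2)
    (fun σ hσ => mem_filter.mpr ⟨funOfRepVals_mem_funsIcc hσ, kerPartition_funOfRepVals hP hσ⟩)
    ?_ ?_
  · intro g hg
    funext t
    have hgP := (mem_filter.mp hg).2
    have hi : (t + 1 : ℤ) ∈ pmN n := mem_pmN.mpr (by omega)
    obtain ⟨hB, hiB⟩ := blockOf_mem (mem_BPartitions.mp hP).2 hi
    rw [funOfRepVals, blockVal_repVals hgP hB hiB, oddExt_natCast_add_one]
  · intro σ _
    funext r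
    obtain ⟨hsub, hP⟩ := mem_BPartitions.mp hP
    obtain ⟨hrP, -, hmin⟩ := mem_reps.mp r.2
    rw [repVals, oddExt_funOfRepVals hP σ (hsub _ hrP hmin), blockOf_eq hP hrP hmin,
      blockVal_of_mem_reps σ r.2]

end Fibers

theorem two_mul_add_one_pow_eq_sum_SB (n m : ℕ) :
    (2 * m + 1) ^ n = ∑ k ∈ range (n + 1), SB n k * (2 ^ k * m.descFactorial k) := by
  calc (2 * m + 1) ^ n
      = ∑ P ∈ BPartitions n, ((funsIcc n m).filter fun g => kerPartition g = P).card := by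
        rw [← card_funsIcc, card_eq_sum_card_fiberwise fun g _ => kerPartition_mem_BPartitions g]
    _ = ∑ P ∈ BPartitions n, 2 ^ (reps P).card * m.descFactorial (reps P).card :=
        sum_congr rfl fun P hP => card_filter_kerPartition_eq hP m
    _ = ∑ k ∈ range (n + 1), SB n k * (2 ^ k * m.descFactorial k) := by
        rw [← sum_fiberwise_of_maps_to fun P hP => mem_range_succ_iff.mpr (card_reps_le hP)]
        refine sum_congr rfl fun k _ => ?_
        rw [SB_eq_card_filter_card_reps, card_eq_sum_ones, sum_mul, one_mul]
        exact sum_congr rfl fun P hP => by rw [(mem_filter.mp hP).2]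

lemma fallB_two_mul_add_one (m k : ℕ) :
    fallB (2 * m + 1) k = 2 ^ k * m.descFactorial k := by
  induction k with
  | zero => simp [fallB]
  | succ k ih =>
    rw [fallB, prod_range_succ, ← fallB, ih, Nat.descFactorial_succ]
    rcases le_or_gt k m with h | h
    · push_cast [h]
      ring
    · simp [Nat.descFactorial_eq_zero_iff_lt.mpr h]

open Polynomial

lemma fallB_eq_eval (x : ℝ) (k : ℕ) :
    fallB x k = (∏ i ∈ range k, (X - C (2 * (i : ℝ) + 1))).eval x := by
  simp [fallB, eval_prod]

theorem pow_eq_sum_SB_fallB (x : ℝ) (n : ℕ) :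
    x ^ n = ∑ k ∈ Finset.range (n + 1), (SB n k : ℝ) * fallB x k := by
  set q : ℝ[X] := ∑ k ∈ range (n + 1), C (SB n k : ℝ) * ∏ i ∈ range k, (X - C (2 * (i : ℝ) + 1))
  have hq (y : ℝ) : q.eval y = ∑ k ∈ range (n + 1), (SB n k : ℝ) * fallB y k := by
    simp only [q, eval_finsetSum, eval_mul, eval_C, fallB_eq_eval]
  have hodd (m : ℕ) : (X ^ n : ℝ[X]).eval (2 * m + 1 : ℝ) = q.eval (2 * m + 1 : ℝ) := by
    rw [hq, eval_pow, eval_X]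
    simp_rw [fallB_two_mul_add_one]
    exact_mod_cast two_mul_add_one_pow_eq_sum_SB n m
  have hinf : {y : ℝ | (X ^ n : ℝ[X]).eval y = q.eval y}.Infinite :=
    Set.infinite_of_injective_forall_mem (fun a b h => by simpa using h) hodd
  rw [← hq, ← eq_of_infinite_eval_eq _ _ hinf, eval_pow, eval_X]
end

section
/- (Worpitzky identity of type B) For all natural numbers m and n, (1+2m)^n = Σ_{k=0}^{n} C(n+m−k, n)·E^B_{n,k}, where E^B_{n,k} is the number of signed permutations in the hyperoctahedral group B_n with exactly k descents. -/
/-- The finite set of signed permutations of `[n]`, encoded by the list of values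
`w(1), …, w(n)`: integers in `{±1,…,±n}` whose absolute values are pairwise distinct. -/
noncomputable def SignedPerms (n : ℕ) : Finset (Fin n → ℤ) :=
  (Fintype.piFinset (fun _ : Fin n => pmN n)).filter
    (fun w => ∀ i j : Fin n, |w i| = |w j| → i = j)

/-- Extension of `w` with `w(0) := 0`. -/
def extSigned (n : ℕ) (w : Fin n → ℤ) : ℕ → ℤ :=
  fun j => if h : 0 < j ∧ j ≤ n then w ⟨j - 1, by omega⟩ else 0

/-- The number of descents of a signed permutation: indices `0 ≤ i ≤ n-1` with
`w(i) > w(i+1)`, where `w(0) := 0`. -/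
def descB (n : ℕ) (w : Fin n → ℤ) : ℕ :=
  ((Finset.range n).filter (fun i => extSigned n w (i + 1) < extSigned n w i)).card

/-- The type `B` Eulerian number: the number of signed permutations of `[n]`
with exactly `k` descents. -/
noncomputable def EB (n k : ℕ) : ℕ := ((SignedPerms n).filter (fun w => descB n w = k)).card

/-! Write `e` for a signed permutation `w ∈ B_n` extended by `e 0 = 0`. Deleting the entry of
absolute value `n + 1` from a signed permutation of `[n + 1]` leaves one of `[n]`, so `B_{n+1}`
is in bijection with the insertions of `±(n + 1)` into the `n + 1` slots of the elements of `B_n`.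
The inserted value is extreme, so in an inner slot it forms exactly one descent with its two
neighbours, replacing their comparison, and at the end it forms a descent only when negative.
Thus `w` with `d` descents has `2d + 1` children with `d` descents and `2(n - d) + 1` with
`d + 1`, and `(2d + 1) C(n+1+m-d, n+1) + (2(n-d) + 1) C(n+m-d, n+1) = (1 + 2m) C(n+m-d, n)` gives
`∑_{v ∈ B_{n+1}} C(n+1+m-des v, n+1) = (1 + 2m) ∑_{w ∈ B_n} C(n+m-des w, n)`. -/

open Finset

def countDescents (n : ℕ) (f : ℕ → ℤ) : ℕ := #{i ∈ range n | f (i + 1) < f i}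

def insertAt (q : ℕ) (x : ℤ) (f : ℕ → ℤ) : ℕ → ℤ :=
  fun j => if j < q then f j else if j = q then x else f (j - 1)

section Descents

variable {n q j : ℕ} {x : ℤ} {f g : ℕ → ℤ}

lemma insertAt_of_lt (h : j < q) : insertAt q x f j = f j := if_pos h

@[simp] lemma insertAt_self : insertAt q x f q = x := by simp [insertAt]

lemma insertAt_succ_of_le (h : q ≤ j) : insertAt q x f (j + 1) = f j := by
  simp [insertAt, show ¬ j + 1 < q by omega, show j + 1 ≠ q by omega]

lemma countDescents_succ :
    countDescents (n + 1) f = countDescents n f + if f (n + 1) < f n then 1 else 0 := by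
  simp only [countDescents, card_filter, sum_range_succ]

lemma countDescents_congr (h : ∀ j ≤ n, f j = g j) : countDescents n f = countDescents n g := by
  refine congrArg card (filter_congr fun i hi => ?_)
  rw [mem_range] at hi
  rw [h i hi.le, h (i + 1) hi]

lemma countDescents_insertAt_end :
    countDescents (n + 1) (insertAt (n + 1) x f) =
      countDescents n f + if x < f n then 1 else 0 := by
  rw [countDescents_succ, insertAt_self, insertAt_of_lt n.lt_succ_self,
    countDescents_congr fun j hj => insertAt_of_lt (Nat.lt_succ_of_le hj)]

-- The slot's old comparison is added on the left so that no truncated subtraction occurs.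
lemma countDescents_insertAt (hq : q < n) :
    countDescents (n + 1) (insertAt (q + 1) x f) + (if f (q + 1) < f q then 1 else 0) =
      countDescents n f + (if x < f q then 1 else 0) + (if f (q + 1) < x then 1 else 0) := by
  induction n, hq using Nat.le_induction with
  | base =>
    rw [countDescents_succ, countDescents_insertAt_end, countDescents_succ (f := f),
      insertAt_self, insertAt_succ_of_le le_rfl]
    omega
  | succ n hn ih =>
    rw [countDescents_succ (n := n + 1), countDescents_succ (n := n) (f := f),
      insertAt_succ_of_le (by omega : q + 1 ≤ n + 1),
      insertAt_succ_of_le (by omega : q + 1 ≤ n)]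
    omega

end Descents

section Extension

variable {n : ℕ} {w : Fin n → ℤ}

lemma extSigned_zero : extSigned n w 0 = 0 := by simp [extSigned]

lemma extSigned_of_lt {j : ℕ} (h : n < j) : extSigned n w j = 0 := by
  simp [extSigned, show ¬ j ≤ n by omega]

lemma extSigned_succ (i : Fin n) : extSigned n w (i + 1) = w i := by
  simp [extSigned, Nat.succ_le_of_lt i.isLt]

lemma extSigned_insertNth (p : Fin (n + 1)) (x : ℤ) :
    extSigned (n + 1) (Fin.insertNth p x w) = insertAt (p + 1) x (extSigned n w) := by
  funext j
  rcases j with _ | j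
  · rw [extSigned_zero, insertAt_of_lt p.val.succ_pos, extSigned_zero]
  rcases Nat.lt_or_ge j (n + 1) with hj | hj
  swap
  · rw [extSigned_of_lt (by omega), insertAt_succ_of_le (by omega), extSigned_of_lt (by omega)]
  obtain ⟨i, rfl⟩ : ∃ i : Fin (n + 1), (i : ℕ) = j := ⟨⟨j, hj⟩, rfl⟩
  rw [extSigned_succ]
  obtain rfl | ⟨k, rfl⟩ := p.eq_self_or_eq_succAbove i
  · simp
  rw [Fin.insertNth_apply_succAbove, ← extSigned_succ (w := w)]
  rcases lt_or_ge k.castSucc p with hk | hk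
  · rw [Fin.succAbove_of_castSucc_lt _ _ hk, Fin.val_castSucc,
      insertAt_of_lt (by simpa [Fin.lt_def] using hk)]
  · rw [Fin.succAbove_of_le_castSucc _ _ hk, Fin.val_succ,
      insertAt_succ_of_le (by simpa [Fin.le_def] using hk)]

end Extension

section ExtremeInsertion

variable {n : ℕ} {w : Fin n → ℤ} {x : ℤ}

lemma descB_eq_countDescents : descB n w = countDescents n (extSigned n w) := rfl

lemma abs_extSigned_lt (hx : x ≠ 0) (hw : ∀ i, |w i| < |x|) (j : ℕ) :
    |extSigned n w j| < |x| := by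
  unfold extSigned
  split
  · exact hw _
  · simpa using hx

lemma lt_iff_neg_of_abs_lt {a x : ℤ} (h : |a| < |x|) : x < a ↔ x < 0 := by
  cases abs_cases a <;> cases abs_cases x <;> omega

lemma lt_iff_pos_of_abs_lt {a x : ℤ} (h : |a| < |x|) : a < x ↔ 0 < x := by
  cases abs_cases a <;> cases abs_cases x <;> omega

lemma descB_insertNth_last (hx : x ≠ 0) (hw : ∀ i, |w i| < |x|) :
    descB (n + 1) (Fin.insertNth (Fin.last n) x w) = descB n w + if x < 0 then 1 else 0 := by
  rw [descB_eq_countDescents, extSigned_insertNth, Fin.val_last, countDescents_insertAt_end]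
  simp only [lt_iff_neg_of_abs_lt (abs_extSigned_lt hx hw n), descB_eq_countDescents]

lemma descB_insertNth_castSucc (hx : x ≠ 0) (hw : ∀ i, |w i| < |x|) (i : Fin n) :
    descB (n + 1) (Fin.insertNth i.castSucc x w) =
      descB n w + if extSigned n w (i + 1) < extSigned n w i then 0 else 1 := by
  have key := countDescents_insertAt (x := x) (f := extSigned n w) i.isLt
  simp only [lt_iff_neg_of_abs_lt (abs_extSigned_lt hx hw i),
    lt_iff_pos_of_abs_lt (abs_extSigned_lt hx hw (i + 1))] at key
  rw [descB_eq_countDescents, extSigned_insertNth, Fin.val_castSucc, descB_eq_countDescents]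
  split_ifs at key ⊢ <;> omega

end ExtremeInsertion

section Fiber

variable {M : Type*} [AddCommMonoid M] {n : ℕ} {w : Fin n → ℤ}

lemma sum_range_ite_descent (a b : M) :
    ∑ i ∈ range n, (if extSigned n w (i + 1) < extSigned n w i then a else b) =
      descB n w • a + (n - descB n w) • b := by
  have hsplit := card_filter_add_card_filter_not (s := range n)
    (p := fun i => extSigned n w (i + 1) < extSigned n w i)
  rw [card_range] at hsplit
  rw [sum_ite, sum_const, sum_const, descB, Nat.eq_sub_of_add_eq' hsplit]

lemma sum_descB_insertNth (hw : ∀ i, |w i| ≤ n) (g : ℕ → M) :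
    ∑ p : Fin (n + 1), ∑ x ∈ ({(n : ℤ) + 1, -((n : ℤ) + 1)} : Finset ℤ),
        g (descB (n + 1) (Fin.insertNth p x w)) =
      (2 * descB n w + 1) • g (descB n w) + (2 * (n - descB n w) + 1) • g (descB n w + 1) := by
  have hw' : ∀ x : ℤ, |x| = n + 1 → ∀ i, |w i| < |x| := fun x hx i => by
    have := hw i; omega
  have hpos : |((n : ℤ) + 1)| = n + 1 := abs_of_pos (by positivity)
  have hneg : |-((n : ℤ) + 1)| = n + 1 := by rw [abs_neg, hpos]
  rw [Fin.sum_univ_castSucc]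
  simp only [sum_pair (show (n : ℤ) + 1 ≠ -((n : ℤ) + 1) by omega),
    descB_insertNth_castSucc (by omega) (hw' _ hpos),
    descB_insertNth_castSucc (by omega) (hw' _ hneg),
    descB_insertNth_last (by omega) (hw' _ hpos), descB_insertNth_last (by omega) (hw' _ hneg)]
  set d := descB n w
  have hterm : ∀ i : ℕ, g (d + if extSigned n w (i + 1) < extSigned n w i then 0 else 1) =
      if extSigned n w (i + 1) < extSigned n w i then g d else g (d + 1) := fun i => by
    split_ifs <;> rfl
  simp only [hterm, if_neg (show ¬ (n : ℤ) + 1 < 0 by omega),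
    if_pos (show -((n : ℤ) + 1) < 0 by omega), add_zero]
  rw [Fin.sum_univ_eq_sum_range (fun i => (if extSigned n w (i + 1) < extSigned n w i then g d
    else g (d + 1)) + (if extSigned n w (i + 1) < extSigned n w i then g d else g (d + 1))),
    sum_add_distrib, sum_range_ite_descent]
  simp only [add_smul, mul_smul, two_smul, one_smul]
  abel

end Fiber

section Insertion

variable {n : ℕ}

lemma mem_signedPerms {w : Fin n → ℤ} :
    w ∈ SignedPerms n ↔
      (∀ i, w i ≠ 0 ∧ |w i| ≤ n) ∧ Function.Injective fun i => |w i| := by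
  simp [SignedPerms, Fintype.mem_piFinset, pmN, abs_le, Function.Injective, and_comm]

lemma abs_le_of_mem_signedPerms {w : Fin n → ℤ} (hw : w ∈ SignedPerms n) (i : Fin n) :
    |w i| ≤ n :=
  ((mem_signedPerms.1 hw).1 i).2

lemma insertNth_mem_signedPerms {w : Fin n → ℤ} (hw : w ∈ SignedPerms n) {x : ℤ}
    (hx : |x| = n + 1) (p : Fin (n + 1)) : Fin.insertNth p x w ∈ SignedPerms (n + 1) := by
  obtain ⟨hval, hinj⟩ := mem_signedPerms.1 hw
  refine mem_signedPerms.2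
    ⟨(Fin.forall_iff_succAbove p).2 ⟨?_, fun j => ?_⟩, fun i i' h => ?_⟩
  · simp only [Fin.insertNth_apply_same]
    refine ⟨fun h0 => ?_, by push_cast; omega⟩
    simp [h0] at hx; omega
  · simp only [Fin.insertNth_apply_succAbove]
    exact ⟨(hval j).1, by push_cast; linarith [(hval j).2]⟩
  · have habs : ∀ j, |w j| < |x| := fun j => by linarith [(hval j).2]
    induction i using p.succAboveCases <;> induction i' using p.succAboveCases <;>
      simp only [Fin.insertNth_apply_same, Fin.insertNth_apply_succAbove] at h
    · rfl
    · exact absurd h (habs _).ne'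
    · exact absurd h (habs _).ne
    · rw [hinj h]

lemma removeNth_mem_signedPerms {v : Fin (n + 1) → ℤ} (hv : v ∈ SignedPerms (n + 1))
    {p : Fin (n + 1)} (hp : |v p| = n + 1) : p.removeNth v ∈ SignedPerms n := by
  obtain ⟨hval, hinj⟩ := mem_signedPerms.1 hv
  refine mem_signedPerms.2
    ⟨fun j => ⟨(hval _).1, ?_⟩, fun j j' h => p.succAbove_right_injective (hinj h)⟩
  have hne : |v (p.succAbove j)| ≠ n + 1 := fun h => p.succAbove_ne j (hinj (h.trans hp.symm))
  have := (hval (p.succAbove j)).2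
  push_cast at this
  simp only [Fin.removeNth_apply]
  omega

lemma exists_abs_eq_of_mem_signedPerms {v : Fin (n + 1) → ℤ} (hv : v ∈ SignedPerms (n + 1)) :
    ∃ p, |v p| = n + 1 := by
  obtain ⟨hval, hinj⟩ := mem_signedPerms.1 hv
  by_contra! h
  obtain ⟨i, -, i', -, hne, heq⟩ := exists_ne_map_eq_of_card_lt_of_maps_to
    (s := univ) (t := Icc (1 : ℤ) n) (f := fun i => |v i|) (by simp) fun i _ => by
      have hle := (hval i).2
      have hpos := abs_pos.2 (hval i).1
      have hne := h i
      push_cast at hle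
      rw [mem_coe, mem_Icc]
      dsimp only
      omega
  exact hne (hinj heq)

lemma eq_of_insertNth_eq_insertNth {w w' : Fin n → ℤ} (hw' : ∀ j, |w' j| ≤ n) {x x' : ℤ}
    (hx : |x| = n + 1) {p p' : Fin (n + 1)}
    (h : (Fin.insertNth p x w : Fin (n + 1) → ℤ) = Fin.insertNth p' x' w') :
    p = p' := by
  obtain hpp' | ⟨j, rfl⟩ := p'.eq_self_or_eq_succAbove p
  · exact hpp'
  · have hval := congrFun h (p'.succAbove j)
    rw [Fin.insertNth_apply_same, Fin.insertNth_apply_succAbove] at hval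
    linarith [hw' j, hval ▸ hx]

lemma mem_pair_neg_iff_abs_eq {a x : ℤ} (ha : 0 ≤ a) :
    x ∈ ({a, -a} : Finset ℤ) ↔ |x| = a := by
  rw [mem_insert, mem_singleton, abs_eq ha]

lemma sum_signedPerms_succ {M : Type*} [AddCommMonoid M] (f : (Fin (n + 1) → ℤ) → M) :
    ∑ v ∈ SignedPerms (n + 1), f v = ∑ w ∈ SignedPerms n, ∑ p : Fin (n + 1),
      ∑ x ∈ ({(n : ℤ) + 1, -((n : ℤ) + 1)} : Finset ℤ), f (Fin.insertNth p x w) := by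
  have hpm (x : ℤ) : x ∈ ({(n : ℤ) + 1, -((n : ℤ) + 1)} : Finset ℤ) ↔ |x| = n + 1 :=
    mem_pair_neg_iff_abs_eq (by positivity)
  simp_rw [← sum_product']
  symm
  refine sum_nbij (fun z => Fin.insertNth z.2.1 z.2.2 z.1) ?_ ?_ ?_ fun _ _ => rfl
  · rintro ⟨w, p, x⟩ hz
    simp only [mem_product, mem_univ, true_and, hpm] at hz
    exact insertNth_mem_signedPerms hz.1 hz.2 p
  · rintro ⟨w, p, x⟩ hz ⟨w', p', x'⟩ hz' h
    simp only [coe_product, coe_univ, Set.mem_prod, Set.mem_univ, true_and, mem_coe,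
      hpm] at hz hz'
    dsimp only at h
    obtain rfl := eq_of_insertNth_eq_insertNth (abs_le_of_mem_signedPerms hz'.1) hz.2 h
    obtain ⟨rfl, rfl⟩ := Fin.insertNth_inj.1 h
    rfl
  · intro v hv
    obtain ⟨p, hp⟩ := exists_abs_eq_of_mem_signedPerms hv
    refine ⟨(p.removeNth v, p, v p), ?_, Fin.insertNth_self_removeNth p v⟩
    simp only [coe_product, coe_univ, Set.mem_prod, Set.mem_univ, true_and, mem_coe,
      hpm]
    exact ⟨removeNth_mem_signedPerms hv hp, hp⟩

end Insertion

lemma descB_le (n : ℕ) (w : Fin n → ℤ) : descB n w ≤ n :=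
  (card_filter_le _ _).trans (card_range n).le

lemma sum_mul_EB (n : ℕ) (h : ℕ → ℕ) :
    ∑ k ∈ range (n + 1), h k * EB n k = ∑ w ∈ SignedPerms n, h (descB n w) := by
  rw [← sum_fiberwise_of_maps_to' (t := range (n + 1))
    fun w _ => mem_range.2 (Nat.lt_succ_of_le (descB_le n w))]
  simp only [sum_const, smul_eq_mul, EB, mul_comm]

lemma card_signedPerms_zero : #(SignedPerms 0) = 1 := by
  rw [card_eq_one]
  exact ⟨Fin.elim0, eq_singleton_iff_unique_mem.2
    ⟨mem_signedPerms.2 ⟨fun i => i.elim0, fun i => i.elim0⟩,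
      fun w _ => funext fun i => i.elim0⟩⟩

lemma choose_mul_add_choose_mul {m n d : ℕ} (hd : d ≤ n) :
    (2 * d + 1) * (n + 1 + m - d).choose (n + 1) +
        (2 * (n - d) + 1) * (n + m - d).choose (n + 1) =
      (1 + 2 * m) * (n + m - d).choose n := by
  rcases le_or_gt d m with hdm | hmd
  · have hsucc := Nat.choose_succ_right_eq (n + m - d) n
    rw [show n + m - d - n = m - d by omega] at hsucc
    rw [show n + 1 + m - d = n + m - d + 1 by omega, Nat.choose_succ_succ]
    zify [hdm, hd] at hsucc ⊢
    linear_combination 2 * hsucc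
  · simp only [Nat.choose_eq_zero_of_lt (by omega : n + 1 + m - d < n + 1),
      Nat.choose_eq_zero_of_lt (by omega : n + m - d < n + 1),
      Nat.choose_eq_zero_of_lt (by omega : n + m - d < n), mul_zero, add_zero]

theorem worpitzky_typeB (m n : ℕ) :
    (1 + 2 * m) ^ n = ∑ k ∈ Finset.range (n + 1), (n + m - k).choose n * EB n k := by
  rw [sum_mul_EB]
  induction n with
  | zero => simp [card_signedPerms_zero]
  | succ n ih =>
    rw [pow_succ', ih, mul_sum, sum_signedPerms_succ]
    refine sum_congr rfl fun w hw => ?_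
    rw [sum_descB_insertNth (abs_le_of_mem_signedPerms hw) fun k => (n + 1 + m - k).choose (n + 1),
      smul_eq_mul, smul_eq_mul,
      show n + 1 + m - (descB n w + 1) = n + m - descB n w by omega,
      choose_mul_add_choose_mul (descB_le n w)]
end
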